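/- Let a : Fin n → ℝ with a i ≥ 0 for all i and at least one a i > 0. Then the infimum over probability vectors λ in the n-simplex (with λ i > 0) of max_i (a i / λ i) equals ∑_i a i, attained at λ i = a i / ∑_j a j (restricted to indices with a i > 0). -/
import Mathlib


theorem stmt_1 (n : ℕ) (a : Fin n → ℝ) (hnn : ∀ i, 0 ≤ a i) (hpos : ∃ i, 0 < a i) :
    IsGLB {M : ℝ | ∃ lam : Fin n → ℝ, (∀ i, 0 < lam i) ∧ (∑ i, lam i) = 1 ∧
        M = ⨆ i, a i / lam i} (∑ i, a i) ∧
    ∀ i, 0 < a i → a i / (a i / ∑ j, a j) = ∑ j, a j := by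
  obtain ⟨i0, hi0⟩ := hpos
  haveI : Nonempty (Fin n) := ⟨i0⟩
  have hSpos : 0 < ∑ i, a i :=
    Finset.sum_pos' (fun i _ => hnn i) ⟨i0, Finset.mem_univ i0, hi0⟩
  constructor
  · constructor
    · rintro M ⟨lam, hlam, hsum, rfl⟩
      have hbdd : BddAbove (Set.range fun i => a i / lam i) :=
        Finite.bddAbove_range _
      have h1 : ∀ i, a i ≤ lam i * (⨆ j, a j / lam j) := by
        intro i
        have h := le_ciSup hbdd i
        calc a i = lam i * (a i / lam i) := by
              rw [mul_div_cancel₀ _ (hlam i).ne']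
          _ ≤ lam i * (⨆ j, a j / lam j) :=
              mul_le_mul_of_nonneg_left h (hlam i).le
      calc ∑ i, a i ≤ ∑ i, lam i * (⨆ j, a j / lam j) :=
            Finset.sum_le_sum (fun i _ => h1 i)
        _ = (⨆ j, a j / lam j) := by rw [← Finset.sum_mul, hsum, one_mul]
    · intro b hb
      refine le_of_forall_pos_le_add ?_
      intro ε hε
      have hn : (0:ℝ) < n := by exact_mod_cast i0.pos
      set δ : ℝ := ε / n with hδ
      have hδpos : 0 < δ := div_pos hε hn
      have hSε : 0 < (∑ i, a i) + ε := by linarith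
      set lam : Fin n → ℝ := fun i => (a i + δ) / ((∑ j, a j) + ε) with hlamdef
      have hlampos : ∀ i, 0 < lam i := fun i =>
        div_pos (by have := hnn i; linarith) hSε
      have hsum : ∑ i, lam i = 1 := by
        rw [hlamdef]
        rw [← Finset.sum_div]
        rw [Finset.sum_add_distrib, Finset.sum_const, Finset.card_univ,
          Fintype.card_fin, nsmul_eq_mul, hδ]
        field_simp
      have hmem : (⨆ i, a i / lam i) ∈ {M : ℝ | ∃ lam : Fin n → ℝ,
          (∀ i, 0 < lam i) ∧ (∑ i, lam i) = 1 ∧ M = ⨆ i, a i / lam i} :=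
        ⟨lam, hlampos, hsum, rfl⟩
      have hle : (⨆ i, a i / lam i) ≤ (∑ i, a i) + ε := by
        apply ciSup_le
        intro i
        have hai : 0 < a i + δ := by have := hnn i; linarith
        rw [hlamdef]
        rw [div_div_eq_mul_div, div_le_iff₀ hai]
        have h1 : a i ≤ a i + δ := by linarith
        calc a i * ((∑ j, a j) + ε) ≤ (a i + δ) * ((∑ j, a j) + ε) :=
              mul_le_mul_of_nonneg_right h1 hSε.le
          _ = ((∑ j, a j) + ε) * (a i + δ) := by ring
      exact le_trans (hb hmem) hle
  · intro i hi
    field_simp
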